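/- arXiv:2308.00915 — 3 statements merged into one kernel-verified Lean document; each statement's English description precedes it below -/
import Mathlib

section
/- Let n ∈ ℕ, 0 < d ≤ n, 0 < p < ∞, and 1 ≤ θ ≤ n/d. Then for every measurable function f on ℝ^n, ‖f‖_{L^{θp}(H^{θd})} ≤ θ^{1/(θp)} ‖f‖_{L^p(H^d)}. -/
open MeasureTheory Set ENNReal

noncomputable section

/-- The axis-parallel closed cube with corner `a` and side length `l`. -/
def cubeSet (n : ℕ) (a : Fin n → ℝ) (l : ℝ) : Set (Fin n → ℝ) :=
  {x | ∀ i, a i ≤ x i ∧ x i ≤ a i + l}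

/-- The `d`-dimensional Hausdorff content of `E ⊆ ℝⁿ`, defined as the infimum of
`∑ ℓ(Q_j)^d` over all countable coverings of `E` by axis-parallel cubes. -/
def hContent (n : ℕ) (d : ℝ) (E : Set (Fin n → ℝ)) : ℝ≥0∞ :=
  ⨅ (c : ℕ → (Fin n → ℝ) × ℝ) (_ : E ⊆ ⋃ j, cubeSet n (c j).1 (c j).2),
    ∑' j, ENNReal.ofReal ((c j).2) ^ d

/-- The Choquet integral `∫ g dH^d = ∫_0^∞ H^d({x : g x > t}) dt` of a
nonnegative (`ℝ≥0∞`-valued) function. -/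
def choquetIntegral (n : ℕ) (d : ℝ) (g : (Fin n → ℝ) → ℝ≥0∞) : ℝ≥0∞ :=
  ∫⁻ t in Set.Ioi (0 : ℝ), hContent n d {x | ENNReal.ofReal t < g x}

/-- The Choquet `L^p(H^d)` norm of an `ℝ≥0∞`-valued function. -/
def choquetLpNormE (n : ℕ) (d p : ℝ) (g : (Fin n → ℝ) → ℝ≥0∞) : ℝ≥0∞ :=
  (choquetIntegral n d fun x => g x ^ p) ^ (1 / p)

/-- The Choquet `L^p(H^d)` norm of a real-valued function. -/
def choquetLpNorm (n : ℕ) (d p : ℝ) (f : (Fin n → ℝ) → ℝ) : ℝ≥0∞ :=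
  choquetLpNormE n d p fun x => ENNReal.ofReal |f x|

/-- The weak Choquet `L^p(H^d)` norm of an `ℝ≥0∞`-valued function. -/
def weakNormE (n : ℕ) (d p : ℝ) (g : (Fin n → ℝ) → ℝ≥0∞) : ℝ≥0∞ :=
  ⨆ (t : ℝ) (_ : 0 < t),
    ENNReal.ofReal t * hContent n d {x | ENNReal.ofReal t < g x} ^ (1 / p)

/-- The weak Choquet `L^p(H^d)` norm of a real-valued function. -/
def weakChoquetLpNorm (n : ℕ) (d p : ℝ) (f : (Fin n → ℝ) → ℝ) : ℝ≥0∞ :=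
  weakNormE n d p fun x => ENNReal.ofReal |f x|

/-- The Choquet integral `∫_E |f|^q dH^d` over a set `E`. -/
def choquetSetLq (n : ℕ) (d q : ℝ) (E : Set (Fin n → ℝ)) (f : (Fin n → ℝ) → ℝ) : ℝ≥0∞ :=
  choquetIntegral n d (E.indicator fun x => ENNReal.ofReal |f x| ^ q)

/-- The Choquet–Morrey `𝓜^p_q(H^d)` norm of an `ℝ≥0∞`-valued function. -/
def morreyNormE (n : ℕ) (d p q : ℝ) (g : (Fin n → ℝ) → ℝ≥0∞) : ℝ≥0∞ :=
  ⨆ (a : Fin n → ℝ) (l : ℝ) (_ : 0 < l),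
    ENNReal.ofReal (l ^ (d / p - d / q)) *
      (choquetIntegral n d ((cubeSet n a l).indicator fun x => g x ^ q)) ^ (1 / q)

/-- The Choquet–Morrey `𝓜^p_q(H^d)` norm of a real-valued function. -/
def morreyNorm (n : ℕ) (d p q : ℝ) (f : (Fin n → ℝ) → ℝ) : ℝ≥0∞ :=
  morreyNormE n d p q fun x => ENNReal.ofReal |f x|

/-- The Lorentz `L^{p,r}(H^d)` quasinorm of a real-valued function. -/
def lorentzNorm (n : ℕ) (d p r : ℝ) (f : (Fin n → ℝ) → ℝ) : ℝ≥0∞ :=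
  (∫⁻ t in Set.Ioi (0 : ℝ),
      ((ENNReal.ofReal t) ^ p * hContent n d {x | t < |f x|}) ^ (r / p) *
        (ENNReal.ofReal t)⁻¹) ^ (1 / r)

/-- The fractional maximal operator `M_α` (with values in `ℝ≥0∞`). -/
def fracMaximal (n : ℕ) (α : ℝ) (f : (Fin n → ℝ) → ℝ) (x : Fin n → ℝ) : ℝ≥0∞ :=
  ⨆ (a : Fin n → ℝ) (l : ℝ) (_ : 0 < l) (_ : x ∈ cubeSet n a l),
    ENNReal.ofReal (l ^ (α - (n : ℝ))) * ∫⁻ y in cubeSet n a l, ENNReal.ofReal |f y|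

/-- The Euclidean norm on `Fin n → ℝ`. -/
def euclNorm {n : ℕ} (x : Fin n → ℝ) : ℝ := Real.sqrt (∑ i, x i ^ 2)

/-- The fractional integral operator `I_α`. -/
def fracIntegral (n : ℕ) (α : ℝ) (f : (Fin n → ℝ) → ℝ) (x : Fin n → ℝ) : ℝ :=
  ∫ y, f y / euclNorm (x - y) ^ ((n : ℝ) - α)

/-!
Covering `E` by cubes `Q_j` and using `∑ aⱼ^θ ≤ (∑ aⱼ)^θ` for `θ ≥ 1` gives
`H^{θd}(E) ≤ H^d(E)^θ`. With `φ(s) = H^d{|f|^p > s}` the level sets of `|f|^{θp}` give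
`∫ |f|^{θp} dH^{θd} ≤ ∫₀^∞ φ(t^{1/θ})^θ dt = θ ∫₀^∞ s^{θ-1} φ(s)^θ ds`, and since `φ` is
decreasing, `s φ(s) ≤ ∫ φ = ∫ |f|^p dH^d`, which bounds the last integral by `θ (∫ φ)^θ`.
-/

namespace ENNReal

lemma rpow_eq_rpow_sub_one_mul (a : ℝ≥0∞) {θ : ℝ} (hθ : 1 ≤ θ) : a ^ θ = a ^ (θ - 1) * a := by
  conv_lhs => rw [← sub_add_cancel θ 1]
  rw [rpow_add_of_nonneg _ _ (sub_nonneg.2 hθ) zero_le_one, rpow_one]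

lemma tsum_rpow_le_rpow_tsum {ι : Type*} (a : ι → ℝ≥0∞) {θ : ℝ} (hθ : 1 ≤ θ) :
    ∑' j, a j ^ θ ≤ (∑' j, a j) ^ θ :=
  calc ∑' j, a j ^ θ
      = ∑' j, a j ^ (θ - 1) * a j := by simp_rw [← rpow_eq_rpow_sub_one_mul _ hθ]
    _ ≤ ∑' j, (∑' i, a i) ^ (θ - 1) * a j := by
        gcongr with j
        exact ENNReal.le_tsum j
    _ = (∑' j, a j) ^ θ := by rw [ENNReal.tsum_mul_left, ← rpow_eq_rpow_sub_one_mul _ hθ]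

end ENNReal

lemma hContent_mono {n : ℕ} {d : ℝ} {E F : Set (Fin n → ℝ)} (h : E ⊆ F) :
    hContent n d E ≤ hContent n d F :=
  le_iInf₂ fun c hc => iInf₂_le c (h.trans hc)

lemma hContent_mul_le_rpow {n : ℕ} {d θ : ℝ} (hθ : 1 ≤ θ) (E : Set (Fin n → ℝ)) :
    hContent n (θ * d) E ≤ hContent n d E ^ θ := by
  have hθ₀ : 0 < θ := zero_lt_one.trans_le hθ
  rw [← ENNReal.rpow_inv_le_iff hθ₀]
  refine le_iInf₂ fun c hc => (ENNReal.rpow_inv_le_iff hθ₀).2 ?_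
  calc hContent n (θ * d) E ≤ ∑' j, ENNReal.ofReal (c j).2 ^ (θ * d) := iInf₂_le c hc
    _ = ∑' j, (ENNReal.ofReal (c j).2 ^ d) ^ θ := by simp_rw [mul_comm θ d, ENNReal.rpow_mul]
    _ ≤ (∑' j, ENNReal.ofReal (c j).2 ^ d) ^ θ := ENNReal.tsum_rpow_le_rpow_tsum _ hθ

lemma mul_le_setLIntegral_Ioi_of_antitoneOn {φ : ℝ → ℝ≥0∞} (hφ : AntitoneOn φ (Ioi 0))
    {s : ℝ} (hs : 0 < s) : ENNReal.ofReal s * φ s ≤ ∫⁻ u in Ioi 0, φ u :=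
  calc ENNReal.ofReal s * φ s = ∫⁻ _ in Ioo 0 s, φ s := by
        rw [setLIntegral_const, Real.volume_Ioo, sub_zero, mul_comm]
    _ ≤ ∫⁻ u in Ioo 0 s, φ u :=
        setLIntegral_mono' measurableSet_Ioo fun u hu => hφ hu.1 hs hu.2.le
    _ ≤ ∫⁻ u in Ioi 0, φ u := lintegral_mono_set Ioo_subset_Ioi_self

lemma lintegral_comp_rpow_Ioi (g : ℝ → ℝ≥0∞) {p : ℝ} (hp : p ≠ 0) :
    ∫⁻ x in Ioi 0, ENNReal.ofReal |p * x ^ (p - 1)| * g (x ^ p) = ∫⁻ y in Ioi 0, g y := by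
  have himage : (fun x : ℝ => x ^ p) '' Ioi 0 = Ioi 0 := by
    ext y
    refine ⟨?_, fun hy => ⟨y ^ p⁻¹, Real.rpow_pos_of_pos hy _, Real.rpow_inv_rpow hy.le hp⟩⟩
    rintro ⟨x, hx, rfl⟩
    exact Real.rpow_pos_of_pos hx p
  rw [← lintegral_image_eq_lintegral_abs_deriv_mul measurableSet_Ioi
      (fun x hx => (Real.hasDerivAt_rpow_const (Or.inl (ne_of_gt hx))).hasDerivWithinAt)
      ((Real.rpow_left_injOn hp).mono Ioi_subset_Ici_self), himage]

lemma setLIntegral_Ioi_rpow_comp_rpow_inv_le {φ : ℝ → ℝ≥0∞} (hφ : AntitoneOn φ (Ioi 0))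
    {θ : ℝ} (hθ : 1 ≤ θ) :
    ∫⁻ t in Ioi 0, φ (t ^ θ⁻¹) ^ θ ≤ ENNReal.ofReal θ * (∫⁻ s in Ioi 0, φ s) ^ θ := by
  set A := ∫⁻ s in Ioi 0, φ s
  have hθ₀ : 0 < θ := zero_lt_one.trans_le hθ
  rcases eq_or_ne A ∞ with hA | hA
  · simp [hA, ENNReal.top_rpow_of_pos hθ₀, hθ₀]
  -- `s φ(s) ≤ A` by monotonicity, so `φ(s)^θ ≤ (A / s)^(θ - 1) φ(s)`
  have hpointwise : ∀ s ∈ Ioi (0 : ℝ), ENNReal.ofReal |θ * s ^ (θ - 1)| * φ ((s ^ θ) ^ θ⁻¹) ^ θ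
      ≤ ENNReal.ofReal θ * A ^ (θ - 1) * φ s := by
    intro s (hs : 0 < s)
    rw [Real.rpow_rpow_inv hs.le hθ₀.ne', abs_of_pos (by positivity),
      ENNReal.ofReal_mul hθ₀.le, ← ENNReal.ofReal_rpow_of_pos hs,
      ENNReal.rpow_eq_rpow_sub_one_mul _ hθ]
    calc ENNReal.ofReal θ * ENNReal.ofReal s ^ (θ - 1) * (φ s ^ (θ - 1) * φ s)
        = ENNReal.ofReal θ * (ENNReal.ofReal s * φ s) ^ (θ - 1) * φ s := by
          rw [ENNReal.mul_rpow_of_nonneg _ _ (sub_nonneg.2 hθ)]; ring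
      _ ≤ ENNReal.ofReal θ * A ^ (θ - 1) * φ s := by
          gcongr
          exact mul_le_setLIntegral_Ioi_of_antitoneOn hφ hs
  calc ∫⁻ t in Ioi 0, φ (t ^ θ⁻¹) ^ θ
      = ∫⁻ s in Ioi 0, ENNReal.ofReal |θ * s ^ (θ - 1)| * φ ((s ^ θ) ^ θ⁻¹) ^ θ :=
        (lintegral_comp_rpow_Ioi (fun t => φ (t ^ θ⁻¹) ^ θ) hθ₀.ne').symm
    _ ≤ ∫⁻ s in Ioi 0, ENNReal.ofReal θ * A ^ (θ - 1) * φ s :=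
        setLIntegral_mono' measurableSet_Ioi hpointwise
    _ = ENNReal.ofReal θ * A ^ (θ - 1) * A :=
        lintegral_const_mul' _ _ (ENNReal.mul_ne_top ENNReal.ofReal_ne_top
          (ENNReal.rpow_ne_top_of_nonneg (sub_nonneg.2 hθ) hA))
    _ = ENNReal.ofReal θ * A ^ θ := by rw [mul_assoc, ← ENNReal.rpow_eq_rpow_sub_one_mul _ hθ]

lemma choquetLpNormE_mul_le {n : ℕ} {d p θ : ℝ} (hp : 0 < p) (hθ : 1 ≤ θ)
    (g : (Fin n → ℝ) → ℝ≥0∞) :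
    choquetLpNormE n (θ * d) (θ * p) g ≤
      ENNReal.ofReal (θ ^ (1 / (θ * p))) * choquetLpNormE n d p g := by
  have hθ₀ : 0 < θ := zero_lt_one.trans_le hθ
  set φ : ℝ → ℝ≥0∞ := fun s => hContent n d {x | ENNReal.ofReal s < g x ^ p}
  have hφ : Antitone φ := fun s s' h =>
    hContent_mono fun x hx => (ENNReal.ofReal_le_ofReal h).trans_lt hx
  have hlevel : ∀ t ∈ Ioi (0 : ℝ),
      hContent n (θ * d) {x | ENNReal.ofReal t < g x ^ (θ * p)} ≤ φ (t ^ θ⁻¹) ^ θ := by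
    intro t (ht : 0 < t)
    have hroot : ENNReal.ofReal t = ENNReal.ofReal (t ^ θ⁻¹) ^ θ := by
      rw [ENNReal.ofReal_rpow_of_pos (Real.rpow_pos_of_pos ht _), Real.rpow_inv_rpow ht.le hθ₀.ne']
    have hset : {x | ENNReal.ofReal t < g x ^ (θ * p)} =
        {x | ENNReal.ofReal (t ^ θ⁻¹) < g x ^ p} := by
      ext x
      change ENNReal.ofReal t < g x ^ (θ * p) ↔ ENNReal.ofReal (t ^ θ⁻¹) < g x ^ p
      rw [hroot, mul_comm, ENNReal.rpow_mul, ENNReal.rpow_lt_rpow_iff hθ₀]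
    rw [hset]
    exact hContent_mul_le_rpow hθ _
  calc choquetLpNormE n (θ * d) (θ * p) g
      = (∫⁻ t in Ioi 0, hContent n (θ * d) {x | ENNReal.ofReal t < g x ^ (θ * p)}) ^
          (1 / (θ * p)) := rfl
    _ ≤ (∫⁻ t in Ioi 0, φ (t ^ θ⁻¹) ^ θ) ^ (1 / (θ * p)) :=
        ENNReal.rpow_le_rpow (setLIntegral_mono' measurableSet_Ioi hlevel) (by positivity)
    _ ≤ (ENNReal.ofReal θ * (∫⁻ s in Ioi 0, φ s) ^ θ) ^ (1 / (θ * p)) :=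
        ENNReal.rpow_le_rpow (setLIntegral_Ioi_rpow_comp_rpow_inv_le (hφ.antitoneOn _) hθ)
          (by positivity)
    _ = ENNReal.ofReal (θ ^ (1 / (θ * p))) * choquetLpNormE n d p g := by
        rw [ENNReal.mul_rpow_of_nonneg _ _ (by positivity), ENNReal.ofReal_rpow_of_pos hθ₀,
          ← ENNReal.rpow_mul, show θ * (1 / (θ * p)) = 1 / p by field_simp]
        rfl

theorem choquetLpNorm_embedding_general (n : ℕ) (d p θ : ℝ)
    (hp : 0 < p) (hθ1 : 1 ≤ θ) :
    ∀ f : (Fin n → ℝ) → ℝ, Measurable f →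
      choquetLpNorm n (θ * d) (θ * p) f ≤
        ENNReal.ofReal (θ ^ (1 / (θ * p))) * choquetLpNorm n d p f :=
  fun _ _ => choquetLpNormE_mul_le hp hθ1 _

/-- Lemma 2.1 (Orobitg–Verdera): `‖f‖_{L^{θp}(H^{θd})} ≤ θ^{1/(θp)} ‖f‖_{L^p(H^d)}`. -/
theorem choquetLpNorm_embedding (n : ℕ) (d p θ : ℝ)
    (hd : 0 < d) (hdn : d ≤ n) (hp : 0 < p) (hθ1 : 1 ≤ θ) (hθ : θ ≤ n / d) :
    ∀ f : (Fin n → ℝ) → ℝ, Measurable f →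
      choquetLpNorm n (θ * d) (θ * p) f ≤
        ENNReal.ofReal (θ ^ (1 / (θ * p))) * choquetLpNorm n d p f :=
  choquetLpNorm_embedding_general n d p θ hp hθ1

end
end

section
/- Let n ∈ ℕ, 0 < d ≤ n, 0 < p < ∞, and θ ≥ 1 with θd ≤ n. Then for every measurable function f on ℝ^n, ‖f‖_{wL^{θp}(H^{θd})} ≤ ‖f‖_{wL^p(H^d)}. -/
open MeasureTheory Set ENNReal

noncomputable section

lemma tsum_rpow_le_rpow_tsum' (a : ℕ → ℝ≥0∞) {θ : ℝ} (hθ : 1 ≤ θ) :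
    ∑' j, a j ^ θ ≤ (∑' j, a j) ^ θ := by
  have h1 : (0:ℝ) ≤ θ - 1 := by linarith
  calc ∑' j, a j ^ θ ≤ ∑' j, (∑' i, a i) ^ (θ - 1) * a j := by
        refine ENNReal.tsum_le_tsum fun j => ?_
        have : a j ^ θ = a j ^ (θ - 1) * a j ^ (1:ℝ) := by
          rw [← ENNReal.rpow_add_of_nonneg _ _ h1 zero_le_one, sub_add_cancel]
        rw [this, ENNReal.rpow_one]
        exact mul_le_mul_left (ENNReal.rpow_le_rpow (ENNReal.le_tsum j) h1) _
    _ = (∑' i, a i) ^ (θ - 1) * ∑' j, a j := ENNReal.tsum_mul_left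
    _ = (∑' i, a i) ^ (θ - 1) * (∑' j, a j) ^ (1:ℝ) := by rw [ENNReal.rpow_one]
    _ = (∑' i, a i) ^ θ := by
        rw [← ENNReal.rpow_add_of_nonneg _ _ h1 zero_le_one, sub_add_cancel]


lemma hContent_theta_le (n : ℕ) {d θ : ℝ} (hθ : 1 ≤ θ) (E : Set (Fin n → ℝ)) :
    hContent n (θ * d) E ≤ hContent n d E ^ θ := by
  have hθ0 : 0 < θ := lt_of_lt_of_le one_pos hθ
  have key : ∀ (c : ℕ → (Fin n → ℝ) × ℝ), E ⊆ ⋃ j, cubeSet n (c j).1 (c j).2 →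
      hContent n (θ * d) E ≤ (∑' j, ENNReal.ofReal ((c j).2) ^ d) ^ θ := by
    intro c hc
    refine le_trans (iInf₂_le c hc) ?_
    calc ∑' j, ENNReal.ofReal ((c j).2) ^ (θ * d)
        = ∑' j, (ENNReal.ofReal ((c j).2) ^ d) ^ θ := by
          simp_rw [← ENNReal.rpow_mul, mul_comm d θ]
      _ ≤ _ := tsum_rpow_le_rpow_tsum' _ hθ
  have h2 : hContent n (θ * d) E ^ (1 / θ) ≤ hContent n d E := by
    refine le_iInf₂ fun c hc => ?_
    calc hContent n (θ * d) E ^ (1 / θ)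
        ≤ ((∑' j, ENNReal.ofReal ((c j).2) ^ d) ^ θ) ^ (1 / θ) :=
          ENNReal.rpow_le_rpow (key c hc) (by positivity)
      _ = ∑' j, ENNReal.ofReal ((c j).2) ^ d := by
          rw [← ENNReal.rpow_mul, mul_one_div_cancel hθ0.ne', ENNReal.rpow_one]
  calc hContent n (θ * d) E = (hContent n (θ * d) E ^ (1 / θ)) ^ θ := by
        rw [← ENNReal.rpow_mul, one_div_mul_cancel hθ0.ne', ENNReal.rpow_one]
    _ ≤ _ := ENNReal.rpow_le_rpow h2 hθ0.le

/-- (W2): `‖f‖_{wL^{θp}(H^{θd})} ≤ ‖f‖_{wL^p(H^d)}`. -/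
theorem weakChoquetLpNorm_embedding (n : ℕ) (d p θ : ℝ)
    (hd : 0 < d) (hdn : d ≤ n) (hp : 0 < p) (hθ1 : 1 ≤ θ) (hθ : θ * d ≤ n) :
    ∀ f : (Fin n → ℝ) → ℝ, Measurable f →
      weakChoquetLpNorm n (θ * d) (θ * p) f ≤ weakChoquetLpNorm n d p f := by
  intro f hf
  have hθ0 : 0 < θ := lt_of_lt_of_le one_pos hθ1
  unfold weakChoquetLpNorm weakNormE
  refine iSup₂_le fun t ht => le_iSup₂_of_le t ht ?_
  refine mul_le_mul_right ?_ _
  set E := {x | ENNReal.ofReal t < ENNReal.ofReal |f x|}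
  have h := hContent_theta_le n hθ1 E (d := d)
  have hexp : θ * (1 / (θ * p)) = 1 / p := by field_simp
  calc hContent n (θ * d) E ^ (1 / (θ * p))
      ≤ (hContent n d E ^ θ) ^ (1 / (θ * p)) :=
        ENNReal.rpow_le_rpow h (by positivity)
    _ = hContent n d E ^ (1 / p) := by rw [← ENNReal.rpow_mul, hexp]

end
end

section
/- Let n ∈ ℕ, 0 < d ≤ n, and 0 < q < p ≤ r < ∞. Then there is a constant C > 0 (independent of f) such that for every measurable function f on ℝ^n, ‖f‖_{M^r_q(H^d)} ≤ C ‖f‖_{M^r_{p,∞}(H^d)}, where ‖f‖_{M^r_{p,∞}(H^d)} = sup_Q ℓ(Q)^{d/r − d/p} ‖f χ_Q‖_{L^{p,∞}(H^d)}, the supremum over all axis-parallel cubes Q. -/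
open MeasureTheory Set ENNReal

noncomputable section

lemma hContent_cubeSet_le {n : ℕ} {d : ℝ} (hd : 0 < d) (a : Fin n → ℝ) (l : ℝ) :
    hContent n d (cubeSet n a l) ≤ ENNReal.ofReal l ^ d := by
  let c : ℕ → (Fin n → ℝ) × ℝ := fun j => (a, if j = 0 then l else 0)
  have hcover : cubeSet n a l ⊆ ⋃ j, cubeSet n (c j).1 (c j).2 :=
    subset_iUnion_of_subset 0 (by simp [c])
  refine (iInf₂_le c hcover).trans_eq ?_
  rw [tsum_eq_single 0 fun j hj => by simp [c, hj, ENNReal.zero_rpow_of_pos hd]]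
  simp [c]

lemma hContent_le_weakNormE_div_rpow {n : ℕ} {d p : ℝ} (hp : 0 < p)
    (g : (Fin n → ℝ) → ℝ≥0∞) {s : ℝ} (hs : 0 < s) :
    hContent n d {x | ENNReal.ofReal s < g x} ≤ (weakNormE n d p g / ENNReal.ofReal s) ^ p := by
  have hle : ENNReal.ofReal s * hContent n d {x | ENNReal.ofReal s < g x} ^ (1 / p)
      ≤ weakNormE n d p g :=
    le_iSup₂ (f := fun (t : ℝ) (_ : 0 < t) =>
      ENNReal.ofReal t * hContent n d {x | ENNReal.ofReal t < g x} ^ (1 / p)) s hs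
  rw [← ENNReal.rpow_inv_le_iff hp, ← one_div]
  exact ENNReal.le_div_iff_mul_le (.inl (ENNReal.ofReal_pos.2 hs).ne') (.inl ofReal_ne_top)
    |>.2 (by rwa [mul_comm] at hle)

lemma choquetIntegral_rpow_eq {n : ℕ} {d q : ℝ} (hq : 0 < q) (g : (Fin n → ℝ) → ℝ≥0∞) :
    choquetIntegral n d (fun x => g x ^ q)
      = ∫⁻ t in Ioi 0, hContent n d {x | ENNReal.ofReal (t ^ (1 / q)) < g x} := by
  refine setLIntegral_congr_fun measurableSet_Ioi fun t ht => ?_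
  simp_rw [← ENNReal.ofReal_rpow_of_nonneg (le_of_lt ht) (by positivity : 0 ≤ 1 / q), one_div,
    ENNReal.rpow_inv_lt_iff hq]

lemma indicator_ofReal_abs_rpow {n : ℕ} {q : ℝ} (hq : 0 < q) (E : Set (Fin n → ℝ))
    (f : (Fin n → ℝ) → ℝ) :
    E.indicator (fun x => ENNReal.ofReal |f x| ^ q)
      = fun x => ENNReal.ofReal |E.indicator f x| ^ q := by
  ext x
  by_cases hx : x ∈ E <;> simp [hx, ENNReal.zero_rpow_of_pos hq]

lemma lintegral_Ioi_ofReal_rpow_neg {β c : ℝ} (hβ : 1 < β) (hc : 0 < c) :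
    ∫⁻ t in Ioi c, ENNReal.ofReal (t ^ (-β)) = ENNReal.ofReal (c ^ (1 - β) / (β - 1)) := by
  have ha : -β < -1 := by linarith
  rw [← ofReal_integral_eq_lintegral_ofReal (integrableOn_Ioi_rpow_of_lt ha hc)
    ((ae_restrict_iff' measurableSet_Ioi).2 (.of_forall fun t ht => by
      have : 0 < t := hc.trans ht
      positivity)), integral_Ioi_rpow_of_lt ha hc]
  congr 1
  rw [show -β + 1 = -(β - 1) by ring, show 1 - β = -(β - 1) by ring, div_neg, neg_div, neg_neg]

lemma lintegral_Ioi_le_of_le_const_of_le_rpow {φ : ℝ → ℝ≥0∞} {M B β : ℝ}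
    (hM : 0 < M) (hB : 0 < B) (hβ : 1 < β)
    (hφM : ∀ t, 0 < t → φ t ≤ ENNReal.ofReal M)
    (hφB : ∀ t, 0 < t → φ t ≤ ENNReal.ofReal (B * t ^ (-β))) :
    ∫⁻ t in Ioi 0, φ t ≤ ENNReal.ofReal (β / (β - 1) * (M ^ (1 - 1 / β) * B ^ (1 / β))) := by
  set T := (B / M) ^ (1 / β) with hT_def
  have hT : 0 < T := by positivity
  have hβ0 : β ≠ 0 := by positivity
  -- `T` balances the two bounds: `B * T ^ (-β) = M`.
  have hMT : M * T = M ^ (1 - 1 / β) * B ^ (1 / β) := by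
    rw [hT_def, Real.div_rpow hB.le hM.le, Real.rpow_sub hM, Real.rpow_one]
    field_simp
  have hBT : B * T ^ (1 - β) = M * T := by
    rw [Real.rpow_sub hT, Real.rpow_one, hT_def, ← Real.rpow_mul (by positivity),
      one_div_mul_cancel hβ0, Real.rpow_one]
    field_simp
  calc ∫⁻ t in Ioi 0, φ t
      = (∫⁻ t in Ioc 0 T, φ t) + ∫⁻ t in Ioi T, φ t := by
        rw [← lintegral_union measurableSet_Ioi Ioc_disjoint_Ioi_same, Ioc_union_Ioi_eq_Ioi hT.le]
    _ ≤ (∫⁻ _ in Ioc 0 T, ENNReal.ofReal M) + ∫⁻ t in Ioi T, ENNReal.ofReal (B * t ^ (-β)) :=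
        add_le_add (setLIntegral_mono' measurableSet_Ioc fun t ht => hφM t ht.1)
          (setLIntegral_mono' measurableSet_Ioi fun t ht => hφB t (hT.trans ht))
    _ = ENNReal.ofReal (M * T) + ENNReal.ofReal (B * (T ^ (1 - β) / (β - 1))) := by
        simp_rw [ENNReal.ofReal_mul hB.le]
        rw [setLIntegral_const, Real.volume_Ioc, sub_zero, lintegral_const_mul _ (by fun_prop),
          lintegral_Ioi_ofReal_rpow_neg hβ hT, ENNReal.ofReal_mul hM.le]
    _ = ENNReal.ofReal (β / (β - 1) * (M ^ (1 - 1 / β) * B ^ (1 / β))) := by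
        have hβ1 : 0 < β - 1 := by linarith
        rw [← ENNReal.ofReal_add (by positivity) (by positivity), ← hMT, mul_div_assoc', hBT]
        congr 1
        field_simp
        ring

lemma choquetIntegral_rpow_le_weakNormE {n : ℕ} {d p q M : ℝ} (hq : 0 < q) (hqp : q < p)
    (hM : 0 < M) (g : (Fin n → ℝ) → ℝ≥0∞)
    (hgM : ∀ s, 0 < s → hContent n d {x | ENNReal.ofReal s < g x} ≤ ENNReal.ofReal M) :
    choquetIntegral n d (fun x => g x ^ q)
      ≤ ENNReal.ofReal (p / (p - q) * M ^ (1 - q / p)) * weakNormE n d p g ^ q := by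
  have hp : 0 < p := hq.trans hqp
  set A := weakNormE n d p g
  have hweak (t : ℝ) (ht : 0 < t) :
      hContent n d {x | ENNReal.ofReal (t ^ (1 / q)) < g x}
        ≤ (A / ENNReal.ofReal (t ^ (1 / q))) ^ p :=
    hContent_le_weakNormE_div_rpow hp g (by positivity)
  rw [choquetIntegral_rpow_eq hq]
  rcases eq_or_ne A 0 with hA0 | hA0
  · calc ∫⁻ t in Ioi 0, hContent n d {x | ENNReal.ofReal (t ^ (1 / q)) < g x}
        ≤ ∫⁻ _ in Ioi (0 : ℝ), 0 := setLIntegral_mono' measurableSet_Ioi fun t ht =>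
          (hweak t ht).trans_eq (by simp [hA0, ENNReal.zero_rpow_of_pos hp])
      _ ≤ _ := by simp
  rcases eq_or_ne A ⊤ with hAtop | hAtop
  · rw [hAtop, ENNReal.top_rpow_of_pos hq, ENNReal.mul_top (by simp; positivity)]
    exact le_top
  obtain ⟨a, ha, hA⟩ : ∃ a : ℝ, 0 < a ∧ A = ENNReal.ofReal a :=
    ⟨A.toReal, ENNReal.toReal_pos hA0 hAtop, (ENNReal.ofReal_toReal hAtop).symm⟩
  have hβ : 1 < p / q := (one_lt_div hq).2 hqp
  have hφB (t : ℝ) (ht : 0 < t) : hContent n d {x | ENNReal.ofReal (t ^ (1 / q)) < g x}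
      ≤ ENNReal.ofReal (a ^ p * t ^ (-(p / q))) := by
    refine (hweak t ht).trans_eq ?_
    rw [hA, ← ENNReal.ofReal_div_of_pos (by positivity), ENNReal.ofReal_rpow_of_pos (by positivity),
      Real.div_rpow ha.le (by positivity), ← Real.rpow_mul ht.le, Real.rpow_neg ht.le,
      div_eq_mul_inv, one_div_mul_eq_div]
  refine (lintegral_Ioi_le_of_le_const_of_le_rpow hM (by positivity) hβ
    (fun s hs => hgM _ (by positivity)) hφB).trans_eq ?_
  rw [hA, ENNReal.ofReal_rpow_of_pos ha, ← ENNReal.ofReal_mul (by positivity),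
    ← Real.rpow_mul ha.le, one_div_div, mul_div_cancel₀ _ hp.ne']
  congr 1
  field_simp

lemma choquetSetLq_cubeSet_rpow_le {n : ℕ} {d p q : ℝ} (hd : 0 < d) (hq : 0 < q) (hqp : q < p)
    (f : (Fin n → ℝ) → ℝ) (a : Fin n → ℝ) {l : ℝ} (hl : 0 < l) :
    choquetSetLq n d q (cubeSet n a l) f ^ (1 / q)
      ≤ ENNReal.ofReal ((p / (p - q)) ^ (1 / q)) *
          (ENNReal.ofReal (l ^ (d / q - d / p)) *
            weakChoquetLpNorm n d p ((cubeSet n a l).indicator f)) := by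
  have hp : 0 < p := hq.trans hqp
  have hlevel (s : ℝ) (hs : 0 < s) : hContent n d
      {x | ENNReal.ofReal s < ENNReal.ofReal |(cubeSet n a l).indicator f x|}
        ≤ ENNReal.ofReal (l ^ d) := by
    refine (hContent_mono fun x hx => ?_).trans
      ((hContent_cubeSet_le hd a l).trans_eq (ENNReal.ofReal_rpow_of_pos hl))
    by_contra hxQ
    simp [indicator_of_notMem hxQ] at hx
  have hint := choquetIntegral_rpow_le_weakNormE hq hqp (by positivity) _ hlevel
  rw [← indicator_ofReal_abs_rpow hq] at hint
  refine (ENNReal.rpow_le_rpow hint (by positivity)).trans_eq ?_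
  rw [ENNReal.mul_rpow_of_nonneg _ _ (by positivity), ← ENNReal.rpow_mul, mul_one_div_cancel hq.ne',
    ENNReal.rpow_one, ENNReal.ofReal_rpow_of_pos (by have := sub_pos.2 hqp; positivity),
    ← mul_assoc, ← ENNReal.ofReal_mul (by positivity), ← Real.rpow_mul (by positivity),
    Real.mul_rpow (by positivity) (by positivity), ← Real.rpow_mul hl.le]
  congr 3
  field_simp

theorem morrey_le_weak_morrey_general (n : ℕ) (d p q r : ℝ)
    (hd : 0 < d) (hq : 0 < q) (hqp : q < p) :
    ∃ C : ℝ, 0 < C ∧ ∀ f : (Fin n → ℝ) → ℝ, Measurable f →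
      morreyNorm n d r q f ≤
        ENNReal.ofReal C *
          ⨆ (a : Fin n → ℝ) (l : ℝ) (_ : 0 < l),
            ENNReal.ofReal (l ^ (d / r - d / p)) *
              weakChoquetLpNorm n d p ((cubeSet n a l).indicator f) := by
  refine ⟨(p / (p - q)) ^ (1 / q), Real.rpow_pos_of_pos (div_pos (hq.trans hqp) (sub_pos.2 hqp)) _,
    fun f _ => iSup₂_le fun a l => iSup_le fun hl => ?_⟩
  set A := weakChoquetLpNorm n d p ((cubeSet n a l).indicator f)
  calc ENNReal.ofReal (l ^ (d / r - d / q)) * choquetSetLq n d q (cubeSet n a l) f ^ (1 / q)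
      ≤ ENNReal.ofReal (l ^ (d / r - d / q)) * (ENNReal.ofReal ((p / (p - q)) ^ (1 / q)) *
          (ENNReal.ofReal (l ^ (d / q - d / p)) * A)) := by
        gcongr
        exact choquetSetLq_cubeSet_rpow_le hd hq hqp f a hl
    _ = ENNReal.ofReal ((p / (p - q)) ^ (1 / q)) * (ENNReal.ofReal (l ^ (d / r - d / p)) * A) := by
        rw [show d / r - d / p = (d / r - d / q) + (d / q - d / p) by ring, Real.rpow_add hl,
          ENNReal.ofReal_mul (Real.rpow_nonneg hl.le _)]
        ring
    _ ≤ _ := by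
        gcongr
        exact le_iSup₂_of_le a l (le_iSup_of_le hl le_rfl)

/-- Inequality (2.4): `‖f‖_{𝓜^r_q(H^d)} ≲ ‖f‖_{𝓜^r_{p,∞}(H^d)}` for `0 < q < p ≤ r < ∞`. -/
theorem morrey_le_weak_morrey (n : ℕ) (d p q r : ℝ)
    (hd : 0 < d) (hdn : d ≤ n) (hq : 0 < q) (hqp : q < p) (hpr : p ≤ r) :
    ∃ C : ℝ, 0 < C ∧ ∀ f : (Fin n → ℝ) → ℝ, Measurable f →
      morreyNorm n d r q f ≤
        ENNReal.ofReal C *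
          ⨆ (a : Fin n → ℝ) (l : ℝ) (_ : 0 < l),
            ENNReal.ofReal (l ^ (d / r - d / p)) *
              weakChoquetLpNorm n d p ((cubeSet n a l).indicator f) :=
  morrey_le_weak_morrey_general n d p q r hd hq hqp

end
end
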